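/- Main theorem (ii): Under the standing assumptions, if Σβₙ < ∞, then the sequence x_{n+1} = αₙu + (1−αₙ)[βₙA_Txₙ + (1−βₙ)A_Sxₙ] converges strongly to P_{Fix(S)}u. -/

import Mathlib

/-!
The fixed-point set `F = C ∩ Fix S` of a nonspreading map is closed and convex, so the metric
projection `p = P_F u` exists and is characterised by `⟪u - p, w - p⟫ ≤ 0` for `w ∈ F`. All
iterates stay in a ball around a common fixed point of `T` and `S`. For `s n = ‖x n - p‖²` one step
of the scheme gives both
`s (n+1) ≤ (1 - α n) s n + 2 α n ⟪u - p, x (n+1) - p⟫ + β n K` and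
`s (n+1) ≤ s n - η n + α n M + β n K` with `η n ≍ ‖x n - S x n‖²`,
and the `β n K` are summable. By the lemma of He–Yang (Maingé's dichotomy plus Xu's lemma) it
suffices that along every subsequence on which `η → 0` the inner products are eventually `≤ ε`.
There `x - S x → 0` and `x (n+1) - x n → 0`, and since `I - S` is demiclosed at `0` (a consequence
of the nonspreading inequality) every weak cluster point `q` lies in `F`, where
`⟪u - p, q - p⟫ ≤ 0`.
-/

open Filter Topology RealInnerProductSpace Function Set

section NormedAddCommGroup

variable {H : Type*} [NormedAddCommGroup H]

def IsQuasiNonexpansiveOn (S : H → H) (C : Set H) : Prop :=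
  ∀ x ∈ C, ∀ q ∈ C ∩ fixedPoints S, ‖S x - q‖ ≤ ‖x - q‖

def IsNonspreadingOn (S : H → H) (C : Set H) : Prop :=
  ∀ x ∈ C, ∀ y ∈ C, 2 * ‖S x - S y‖ ^ 2 ≤ ‖S x - y‖ ^ 2 + ‖x - S y‖ ^ 2

theorem IsNonspreadingOn.isQuasiNonexpansiveOn {S : H → H} {C : Set H}
    (hS : IsNonspreadingOn S C) : IsQuasiNonexpansiveOn S C := by
  intro x hx q ⟨hqC, hq⟩
  have h := hS x hx q hqC
  rw [hq.eq] at h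
  exact pow_le_pow_iff_left₀ (norm_nonneg _) (norm_nonneg _) two_ne_zero |>.1 (by linarith)

theorem IsQuasiNonexpansiveOn.isClosed_inter_fixedPoints {S : H → H} {C : Set H}
    (hS : IsQuasiNonexpansiveOn S C) (hC : IsClosed C) : IsClosed (C ∩ fixedPoints S) := by
  refine isClosed_of_closure_subset fun x hx => ?_
  have hxC : x ∈ C := hC.closure_subset (closure_mono inter_subset_left hx)
  refine ⟨hxC, eq_of_forall_dist_le fun ε hε => ?_⟩
  obtain ⟨q, hq, hxq⟩ := Metric.mem_closure_iff.1 hx (ε / 2) (half_pos hε)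
  have hSq : dist (S x) q ≤ dist x q := by simpa only [dist_eq_norm] using hS x hxC q hq
  linarith [dist_triangle_right (S x) x q]

theorem Set.MapsTo.inter_closedBall {C : Set H} {V : H → H} (hV : MapsTo V C C) {z : H}
    (hVz : ∀ y ∈ C, ‖V y - z‖ ≤ ‖y - z‖) (r : ℝ) :
    MapsTo V (C ∩ Metric.closedBall z r) (C ∩ Metric.closedBall z r) := fun y hy =>
  ⟨hV hy.1, mem_closedBall_iff_norm.2 ((hVz y hy.1).trans (mem_closedBall_iff_norm.1 hy.2))⟩

end NormedAddCommGroup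

section Module

variable {E : Type*} [AddCommGroup E] [Module ℝ E]

theorem smul_add_smul_sub_eq {a b : ℝ} (hab : a + b = 1) (x y v : E) :
    a • x + b • y - v = a • (x - v) + b • (y - v) := by
  obtain rfl := eq_sub_of_add_eq hab
  module

theorem Convex.mapsTo_averaged {s : Set E} (hs : Convex ℝ s) {V : E → E} (hV : MapsTo V s s)
    {δ : ℝ} (hδ : δ ∈ Icc (0 : ℝ) 1) : MapsTo (fun y => (1 - δ) • y + δ • V y) s s :=
  fun _ hy => hs hy (hV hy) (sub_nonneg.2 hδ.2) hδ.1 (sub_add_cancel 1 δ)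

theorem Convex.halpern_iterate_mem {s : Set E} (hs : Convex ℝ s) {A B : E → E}
    (hA : MapsTo A s s) (hB : MapsTo B s s) {u : E} (hu : u ∈ s) {α β : ℕ → ℝ}
    (hα : ∀ n, α n ∈ Icc (0 : ℝ) 1) (hβ : ∀ n, β n ∈ Icc (0 : ℝ) 1) {x : ℕ → E} (hx0 : x 0 ∈ s)
    (hrec : ∀ n, x (n + 1) = α n • u + (1 - α n) • (β n • A (x n) + (1 - β n) • B (x n))) :
    ∀ n, x n ∈ s
  | 0 => hx0
  | n + 1 => by
    have hx := hs.halpern_iterate_mem hA hB hu hα hβ hx0 hrec n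
    rw [hrec n]
    exact hs hu (hs (hA hx) (hB hx) (hβ n).1 (sub_nonneg.2 (hβ n).2) (add_sub_cancel _ _))
      (hα n).1 (sub_nonneg.2 (hα n).2) (add_sub_cancel _ _)

end Module

section NormedSpace

variable {E : Type*} [NormedAddCommGroup E] [NormedSpace ℝ E]

theorem norm_smul_add_smul_sub_le {a b : ℝ} (ha : 0 ≤ a) (hb : 0 ≤ b) (hab : a + b = 1)
    (x y v : E) : ‖a • x + b • y - v‖ ≤ a * ‖x - v‖ + b * ‖y - v‖ := by
  rw [smul_add_smul_sub_eq hab]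
  refine (norm_add_le _ _).trans_eq ?_
  rw [norm_smul_of_nonneg ha, norm_smul_of_nonneg hb]

theorem norm_halpern_step_sub_le {u t v x y : E} {a b δ : ℝ} (ha : a ∈ Icc (0 : ℝ) 1)
    (hb : b ∈ Icc (0 : ℝ) 1) (hδ : δ ∈ Icc (0 : ℝ) 1)
    (hy : y = a • u + (1 - a) • (b • t + (1 - b) • ((1 - δ) • x + δ • v))) :
    ‖y - x‖ ≤ a * ‖u - x‖ + b * ‖t - x‖ + ‖x - v‖ := by
  set w := (1 - δ) • x + δ • v
  have hw : ‖w - x‖ ≤ ‖x - v‖ := by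
    rw [show w - x = δ • (v - x) by module, norm_smul_of_nonneg hδ.1, norm_sub_rev]
    exact mul_le_of_le_one_left (norm_nonneg _) hδ.2
  have h₁ := norm_smul_add_smul_sub_le ha.1 (sub_nonneg.2 ha.2) (add_sub_cancel a 1) u
    (b • t + (1 - b) • w) x
  have h₂ := norm_smul_add_smul_sub_le hb.1 (sub_nonneg.2 hb.2) (add_sub_cancel b 1) t w x
  rw [hy]
  nlinarith [mul_le_mul_of_nonneg_left h₂ (sub_nonneg.2 ha.2),
    mul_nonneg (mul_nonneg ha.1 hb.1) (norm_nonneg (t - x)),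
    mul_nonneg (mul_nonneg ha.1 (sub_nonneg.2 hb.2)) (norm_nonneg (w - x)),
    mul_nonneg hb.1 (norm_nonneg (w - x))]

end NormedSpace

section InnerProductSpace

variable {H : Type*} [NormedAddCommGroup H] [InnerProductSpace ℝ H]

theorem norm_smul_add_smul_sq {a b : ℝ} (hab : a + b = 1) (x y : H) :
    ‖a • x + b • y‖ ^ 2 = a * ‖x‖ ^ 2 + b * ‖y‖ ^ 2 - a * b * ‖x - y‖ ^ 2 := by
  rw [norm_add_sq_real, norm_sub_sq_real, norm_smul, norm_smul, real_inner_smul_left,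
    real_inner_smul_right, mul_pow, mul_pow, Real.norm_eq_abs, Real.norm_eq_abs, sq_abs, sq_abs]
  obtain rfl := eq_sub_of_add_eq hab
  ring

theorem norm_smul_add_smul_sub_sq {a b : ℝ} (hab : a + b = 1) (x y v : H) :
    ‖a • x + b • y - v‖ ^ 2 = a * ‖x - v‖ ^ 2 + b * ‖y - v‖ ^ 2 - a * b * ‖x - y‖ ^ 2 := by
  rw [smul_add_smul_sub_eq hab, norm_smul_add_smul_sq hab, sub_sub_sub_cancel_right]

theorem norm_smul_add_smul_sub_sq_le {a b : ℝ} (ha : 0 ≤ a) (hb : 0 ≤ b) (hab : a + b = 1)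
    (x y v : H) : ‖a • x + b • y - v‖ ^ 2 ≤ a * ‖x - v‖ ^ 2 + b * ‖y - v‖ ^ 2 := by
  rw [norm_smul_add_smul_sub_sq hab]
  have := mul_nonneg (mul_nonneg ha hb) (sq_nonneg ‖x - y‖)
  linarith

theorem norm_add_sq_le_norm_sq_add_two_inner (x y : H) :
    ‖x + y‖ ^ 2 ≤ ‖y‖ ^ 2 + 2 * ⟪x, x + y⟫ := by
  rw [norm_add_sq_real, inner_add_right, real_inner_self_eq_norm_sq]
  nlinarith [sq_nonneg ‖x‖]

theorem norm_averaged_sub_sq_le {δ : ℝ} (hδ : 0 ≤ δ) {x y q : H} (h : ‖y - q‖ ≤ ‖x - q‖) :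
    ‖(1 - δ) • x + δ • y - q‖ ^ 2 ≤ ‖x - q‖ ^ 2 - δ * (1 - δ) * ‖x - y‖ ^ 2 := by
  rw [norm_smul_add_smul_sub_sq (sub_add_cancel 1 δ)]
  have := mul_le_mul_of_nonneg_left (pow_le_pow_left₀ (norm_nonneg _) h 2) hδ
  linarith

theorem IsQuasiNonexpansiveOn.convex_inter_fixedPoints {S : H → H} {C : Set H}
    (hS : IsQuasiNonexpansiveOn S C) (hC : Convex ℝ C) : Convex ℝ (C ∩ fixedPoints S) := by
  intro x hx y hy a b ha hb hab
  have hwC : a • x + b • y ∈ C := hC hx.1 hy.1 ha hb hab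
  refine ⟨hwC, ?_⟩
  set w := a • x + b • y
  have h₁ : ‖x - S w‖ ^ 2 ≤ ‖x - w‖ ^ 2 := by
    rw [norm_sub_rev x, norm_sub_rev x]; gcongr; exact hS w hwC x hx
  have h₂ : ‖y - S w‖ ^ 2 ≤ ‖y - w‖ ^ 2 := by
    rw [norm_sub_rev y, norm_sub_rev y]; gcongr; exact hS w hwC y hy
  -- `‖w - S w‖²` and `‖w - w‖² = 0` expand alike around `x` and `y`, the first termwise larger
  have hSw := norm_smul_add_smul_sub_sq hab x y (S w)
  have hw := norm_smul_add_smul_sub_sq hab x y w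
  rw [sub_self, norm_zero] at hw
  have : ‖w - S w‖ = 0 := by
    nlinarith [mul_le_mul_of_nonneg_left h₁ ha, mul_le_mul_of_nonneg_left h₂ hb,
      norm_nonneg (w - S w)]
  exact (norm_sub_eq_zero_iff.1 this).symm

theorem IsNonspreadingOn.norm_sub_sq_le_inner {S : H → H} {C : Set H} (hS : IsNonspreadingOn S C)
    {x q : H} (hx : x ∈ C) (hq : q ∈ C) :
    ‖q - S q‖ ^ 2 ≤ 2 * ⟪x - q, x - S x⟫ - 2 * ⟪x - q, q - S q⟫ + 4 * ⟪x - S x, q - S q⟫ := by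
  have h := hS x hx q hq
  rw [show S x - S q = (x - q) - (x - S x) + (q - S q) by abel,
    show S x - q = (x - q) - (x - S x) by abel, show x - S q = (x - q) + (q - S q) by abel] at h
  generalize x - q = a, x - S x = e, q - S q = g at h ⊢
  rw [norm_add_sq_real, norm_sub_sq_real, norm_add_sq_real, inner_sub_left] at h
  nlinarith [sq_nonneg ‖e‖, real_inner_comm e a]

def WeakTendsto (y : ℕ → H) (q : H) : Prop :=
  ∀ v : H, Tendsto (fun k => ⟪v, y k⟫) atTop (𝓝 ⟪v, q⟫)

theorem WeakTendsto.inner_sub_tendsto {y : ℕ → H} {q : H} (hy : WeakTendsto y q) (v p : H) :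
    Tendsto (fun k => ⟪v, y k - p⟫) atTop (𝓝 ⟪v, q - p⟫) := by
  simpa only [inner_sub_right] using (hy v).sub_const ⟪v, p⟫

theorem exists_strictMono_weakTendsto [CompleteSpace H] {y : ℕ → H} {B : ℝ}
    (hB : ∀ k, ‖y k‖ ≤ B) : ∃ q : H, ∃ φ : ℕ → ℕ, StrictMono φ ∧ WeakTendsto (y ∘ φ) q := by
  set K := (Submodule.span ℝ (range y)).topologicalClosure
  have hyK : ∀ k, y k ∈ K := fun k =>
    Submodule.le_topologicalClosure _ (Submodule.subset_span (mem_range_self k))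
  have : TopologicalSpace.SeparableSpace K :=
    (countable_range y).isSeparable.span.closure.separableSpace
  have : CompleteSpace K := (Submodule.isClosed_topologicalClosure _).completeSpace_coe
  -- sequential Banach–Alaoglu in the separable space `K`, then Riesz representation
  let f : ℕ → WeakDual ℝ K := fun k => (innerSL ℝ (y k)).comp K.subtypeL
  have hf : ∀ k, f k ∈ WeakDual.toStrongDual ⁻¹' Metric.closedBall 0 B := by
    intro k
    have : ‖(innerSL ℝ (y k)).comp K.subtypeL‖ ≤ B := by
      refine ContinuousLinearMap.opNorm_le_bound _ ((norm_nonneg _).trans (hB k)) fun w => ?_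
      calc ‖⟪y k, (w : H)⟫‖ ≤ ‖y k‖ * ‖w‖ := norm_inner_le_norm _ _
        _ ≤ B * ‖w‖ := by gcongr; exact hB k
    exact (mem_closedBall_zero_iff (a := ((innerSL ℝ (y k)).comp K.subtypeL : StrongDual ℝ K))).2
      this
  obtain ⟨L, -, φ, hφ, hL⟩ := WeakDual.isSeqCompact_closedBall ℝ K 0 B hf
  set q : K := (InnerProductSpace.toDual ℝ K).symm L
  refine ⟨q, φ, hφ, fun v => ?_⟩
  have hproj : ∀ w ∈ K, ⟪v, w⟫ = ⟪K.starProjection v, w⟫ := fun w hw => by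
    rw [Submodule.inner_starProjection_left_eq_right, Submodule.starProjection_eq_self_iff.mpr hw]
  have := ((WeakDual.eval_continuous (K.orthogonalProjectionOnto v)).tendsto L).comp hL
  convert this using 1
  · ext k
    rw [comp_apply, hproj _ (hyK _), real_inner_comm]
    rfl
  · rw [hproj _ q.2, real_inner_comm]
    exact congrArg 𝓝 (InnerProductSpace.toDual_symm_apply (x := K.orthogonalProjectionOnto v))

theorem Convex.mem_of_weakTendsto [CompleteSpace H] {C : Set H} (hCv : Convex ℝ C)
    (hCc : IsClosed C) {y : ℕ → H} {q : H} (hy : ∀ k, y k ∈ C) (hq : WeakTendsto y q) : q ∈ C := by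
  by_contra hqC
  obtain ⟨f, r, hf, hfq⟩ := geometric_hahn_banach_closed_point hCv hCc hqC
  set v := (InnerProductSpace.toDual ℝ H).symm f
  have hv : ∀ w, ⟪v, w⟫ = f w := fun w => InnerProductSpace.toDual_symm_apply
  have : ⟪v, q⟫ ≤ r :=
    le_of_tendsto' (hq v) fun k => by rw [hv]; exact (hf _ (hy k)).le
  linarith [hv q]

theorem IsNonspreadingOn.isFixedPt_of_weakTendsto {S : H → H} {C : Set H}
    (hS : IsNonspreadingOn S C) {y : ℕ → H} {q : H} {B : ℝ} (hy : ∀ k, y k ∈ C)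
    (hyB : ∀ k, ‖y k‖ ≤ B) (hq : q ∈ C) (hwk : WeakTendsto y q)
    (hres : Tendsto (fun k => y k - S (y k)) atTop (𝓝 0)) : IsFixedPt S q := by
  have h₁ : Tendsto (fun k => ⟪y k - q, y k - S (y k)⟫) atTop (𝓝 0) := by
    refine squeeze_zero_norm (fun k => (norm_inner_le_norm _ _).trans
      (mul_le_mul_of_nonneg_right ((norm_sub_le _ _).trans (add_le_add_left (hyB k) _))
        (norm_nonneg _))) ?_
    simpa using (tendsto_zero_iff_norm_tendsto_zero.1 hres).const_mul (B + ‖q‖)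
  have h₂ : Tendsto (fun k => ⟪y k - q, q - S q⟫) atTop (𝓝 0) := by
    simpa [real_inner_comm (q - S q)] using hwk.inner_sub_tendsto (q - S q) q
  have h₃ : Tendsto (fun k => ⟪y k - S (y k), q - S q⟫) atTop (𝓝 0) := by
    simpa using hres.inner (tendsto_const_nhds (x := q - S q))
  have hlim := ((h₁.const_mul 2).sub (h₂.const_mul 2)).add (h₃.const_mul 4)
  simp only [mul_zero, sub_zero, add_zero] at hlim
  have : ‖q - S q‖ ^ 2 ≤ 0 :=
    le_of_tendsto_of_tendsto' tendsto_const_nhds hlim fun k => hS.norm_sub_sq_le_inner (hy k) hq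
  exact (norm_sub_eq_zero_iff.1 (by nlinarith [norm_nonneg (q - S q)])).symm

theorem IsNonspreadingOn.eventually_inner_sub_le [CompleteSpace H] {S : H → H} {C : Set H}
    (hS : IsNonspreadingOn S C) (hCv : Convex ℝ C) (hCc : IsClosed C) {p v : H}
    (hpv : ∀ w ∈ C ∩ fixedPoints S, ⟪v, w - p⟫ ≤ 0) {y : ℕ → H} {B : ℝ} (hy : ∀ k, y k ∈ C)
    (hyB : ∀ k, ‖y k‖ ≤ B) (hres : Tendsto (fun k => y k - S (y k)) atTop (𝓝 0)) :
    ∀ ε > 0, ∀ᶠ k in atTop, ⟪v, y k - p⟫ ≤ ε := by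
  intro ε hε
  by_contra hfreq
  obtain ⟨ψ, hψ, hψε⟩ :=
    extraction_of_frequently_atTop ((not_eventually.1 hfreq).mono fun _ => lt_of_not_ge)
  obtain ⟨q, φ, hφ, hwk⟩ := exists_strictMono_weakTendsto fun k => hyB (ψ k)
  have hqC : q ∈ C := hCv.mem_of_weakTendsto hCc (fun _ => hy _) hwk
  have hSq : IsFixedPt S q := hS.isFixedPt_of_weakTendsto (fun _ => hy _) (fun _ => hyB _) hqC
    hwk (hres.comp (hψ.comp hφ).tendsto_atTop)
  have : ε ≤ ⟪v, q - p⟫ :=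
    ge_of_tendsto (hwk.inner_sub_tendsto v p) (Eventually.of_forall fun k => (hψε (φ k)).le)
  linarith [hpv q ⟨hqC, hSq⟩]

end InnerProductSpace

theorem tendsto_zero_of_forall_eventually_le {s : ℕ → ℝ} (hs : ∀ n, 0 ≤ s n)
    (h : ∀ ε > 0, ∀ᶠ n in atTop, s n ≤ ε) : Tendsto s atTop (𝓝 0) :=
  tendsto_order.2 ⟨fun _ ha => Eventually.of_forall fun n => ha.trans_le (hs n),
    fun _ ha => (h _ (half_pos ha)).mono fun _ hn => hn.trans_lt (half_lt_self ha)⟩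

theorem tendsto_zero_of_le_one_sub_mul_add_mul {s a c : ℕ → ℝ} (hs : ∀ n, 0 ≤ s n)
    (ha : ∀ n, a n ∈ Icc (0 : ℝ) 1)
    (hdiv : Tendsto (fun N => ∑ n ∈ Finset.range N, a n) atTop atTop)
    (hrec : ∀ n, s (n + 1) ≤ (1 - a n) * s n + a n * c n)
    (hc : ∀ ε > 0, ∀ᶠ n in atTop, c n ≤ ε) : Tendsto s atTop (𝓝 0) := by
  refine tendsto_zero_of_forall_eventually_le hs fun ε hε => ?_
  obtain ⟨N, hN⟩ := eventually_atTop.1 (hc (ε / 2) (half_pos hε))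
  set E : ℕ → ℝ := fun n =>
    Real.exp (-(∑ k ∈ Finset.range n, a k - ∑ k ∈ Finset.range N, a k))
  -- `∏ (1 - a k) ≤ exp (-∑ a k)` bounds the decay of the excess of `s` over `ε / 2`
  have hdecay : ∀ n ≥ N, s n ≤ ε / 2 + E n * s N := by
    intro n hn
    induction n, hn using Nat.le_induction with
    | base => simp only [E, sub_self, neg_zero, Real.exp_zero, one_mul]; linarith
    | succ n hn ih =>
      have hE : E (n + 1) = Real.exp (-a n) * E n := by
        simp only [E, Finset.sum_range_succ, ← Real.exp_add]; ring_nf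
      have h₁ := mul_le_mul_of_nonneg_left ih (sub_nonneg.2 (ha n).2)
      have h₂ := mul_le_mul_of_nonneg_left (hN n hn) (ha n).1
      have hEn : 0 ≤ E n * s N := mul_nonneg (Real.exp_pos _).le (hs N)
      have h₃ := mul_le_mul_of_nonneg_right (by linarith [Real.add_one_le_exp (-a n)] :
        1 - a n ≤ Real.exp (-a n)) hEn
      rw [hE]
      nlinarith [hrec n]
  have hE0 : Tendsto (fun n => E n * s N) atTop (𝓝 0) := by
    have := (Real.tendsto_exp_neg_atTop_nhds_zero.comp (tendsto_atTop_add_const_right _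
      (-∑ k ∈ Finset.range N, a k) hdiv)).mul_const (s N)
    rw [zero_mul] at this
    exact this.congr fun n => by simp only [E, comp_apply, sub_eq_add_neg]
  filter_upwards [eventually_ge_atTop N, hE0.eventually (ge_mem_nhds (half_pos hε))] with n hn hEn
  linarith [hdecay n hn]

theorem exists_tendsto_atTop_lt_succ {s : ℕ → ℝ} (h : ∀ N, ∃ n ≥ N, s n < s (n + 1)) :
    ∃ τ : ℕ → ℕ, Tendsto τ atTop atTop ∧ (∀ n, s (τ n) < s (τ n + 1)) ∧
      ∀ᶠ n in atTop, s n ≤ s (τ n + 1) := by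
  classical
  obtain ⟨n₀, -, hn₀⟩ := h 0
  set P : ℕ → Prop := fun k => s k < s (k + 1)
  refine ⟨fun n => Nat.findGreatest P (max n n₀), ?_,
    fun n => Nat.findGreatest_spec (P := P) (le_max_right n n₀) hn₀, ?_⟩
  · refine tendsto_atTop_atTop.2 fun b => ?_
    obtain ⟨k, hkb, hk⟩ := h b
    exact ⟨k, fun n hn => hkb.trans (Nat.le_findGreatest (hn.trans (le_max_left _ _)) hk)⟩
  · filter_upwards [eventually_ge_atTop n₀] with n hn
    simp only [max_eq_left hn]
    have hm : P (Nat.findGreatest P n) := Nat.findGreatest_spec hn hn₀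
    rcases (Nat.findGreatest_le (P := P) n).eq_or_lt with heq | hlt
    · rw [heq] at hm ⊢
      exact hm.le
    · -- past its last increase before `n`, the sequence is nonincreasing
      have hdesc : ∀ j, Nat.findGreatest P n + 1 ≤ j → j ≤ n →
          s j ≤ s (Nat.findGreatest P n + 1) := by
        intro j hj
        induction j, hj using Nat.le_induction with
        | base => exact fun _ => le_rfl
        | succ j hj ih =>
          intro hjn
          have hj' : ¬P j := Nat.findGreatest_is_greatest (n := n) (by omega) (by omega)
          exact (not_lt.1 hj').trans (ih (by omega))
      exact hdesc n hlt le_rfl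

theorem tendsto_zero_of_le_one_sub_mul_add_mul_of_le_sub {s a η c : ℕ → ℝ} {M : ℝ}
    (hs : ∀ n, 0 ≤ s n) (ha : ∀ n, a n ∈ Icc (0 : ℝ) 1) (ha0 : Tendsto a atTop (𝓝 0))
    (hdiv : Tendsto (fun N => ∑ n ∈ Finset.range N, a n) atTop atTop) (hη : ∀ n, 0 ≤ η n)
    (h₁ : ∀ n, s (n + 1) ≤ (1 - a n) * s n + a n * c n)
    (h₂ : ∀ n, s (n + 1) ≤ s n - η n + a n * M)
    (hc : ∀ φ : ℕ → ℕ, Tendsto φ atTop atTop → Tendsto (η ∘ φ) atTop (𝓝 0) →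
      ∀ ε > 0, ∀ᶠ k in atTop, c (φ k) ≤ ε) :
    Tendsto s atTop (𝓝 0) := by
  by_cases hmono : ∃ N, ∀ n ≥ N, s (n + 1) ≤ s n
  · obtain ⟨N, hN⟩ := hmono
    have hanti : Antitone fun n => s (n + N) :=
      antitone_nat_of_succ_le fun n => by simpa only [add_right_comm] using hN (n + N) le_add_self
    have hL := (tendsto_add_atTop_iff_nat N).1
      (tendsto_atTop_ciInf hanti ⟨0, forall_mem_range.2 fun n => hs _⟩)
    have hbound : Tendsto (fun n => s n - s (n + 1) + a n * M) atTop (𝓝 0) := by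
      simpa using (hL.sub ((tendsto_add_atTop_iff_nat 1).2 hL)).add (ha0.mul_const M)
    have hη0 : Tendsto η atTop (𝓝 0) := squeeze_zero hη (fun n => by linarith [h₂ n]) hbound
    exact tendsto_zero_of_le_one_sub_mul_add_mul hs ha hdiv h₁ (hc id tendsto_id hη0)
  · push Not at hmono
    obtain ⟨τ, hτ, hτs, hle⟩ := exists_tendsto_atTop_lt_succ hmono
    have hbound : Tendsto (fun n => a (τ n) * M) atTop (𝓝 0) := by
      simpa using (ha0.comp hτ).mul_const M
    have hητ : Tendsto (η ∘ τ) atTop (𝓝 0) :=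
      squeeze_zero (fun n => hη _) (fun n => by simp only [comp_apply]; linarith [h₂ (τ n), hτs n])
        hbound
    -- at an increase, the first inequality forces `s` below `c`
    have hsc : ∀ n, s (τ n + 1) ≤ c (τ n) := fun n => by
      by_contra! hcs
      have h := h₁ (τ n)
      rcases (ha (τ n)).1.eq_or_lt with h0 | hpos
      · rw [← h0] at h
        linarith [hτs n]
      · nlinarith [mul_le_mul_of_nonneg_left (hτs n).le (sub_nonneg.2 (ha (τ n)).2),
          mul_lt_mul_of_pos_left hcs hpos]
    refine tendsto_zero_of_forall_eventually_le hs fun ε hε => ?_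
    filter_upwards [hle, hc τ hτ hητ ε hε] with n h₁ h₂
    linarith [hsc n]

theorem tendsto_zero_of_le_one_sub_mul_add_mul_of_le_sub_of_summable {s a η c d : ℕ → ℝ} {M : ℝ}
    (hs : ∀ n, 0 ≤ s n) (ha : ∀ n, a n ∈ Icc (0 : ℝ) 1) (ha0 : Tendsto a atTop (𝓝 0))
    (hdiv : Tendsto (fun N => ∑ n ∈ Finset.range N, a n) atTop atTop) (hη : ∀ n, 0 ≤ η n)
    (hd : ∀ n, 0 ≤ d n) (hdsum : Summable d)
    (h₁ : ∀ n, s (n + 1) ≤ (1 - a n) * s n + a n * c n + d n)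
    (h₂ : ∀ n, s (n + 1) ≤ s n - η n + a n * M + d n)
    (hc : ∀ φ : ℕ → ℕ, Tendsto φ atTop atTop → Tendsto (η ∘ φ) atTop (𝓝 0) →
      ∀ ε > 0, ∀ᶠ k in atTop, c (φ k) ≤ ε) :
    Tendsto s atTop (𝓝 0) := by
  -- the errors are absorbed by adding the tails `r n = ∑_{k ≥ n} d k` to `s` and to `c`
  set r : ℕ → ℝ := fun n => ∑' k, d (k + n)
  have hr0 : ∀ n, 0 ≤ r n := fun n => tsum_nonneg fun k => hd _
  have hr : ∀ n, r n = d n + r (n + 1) := fun n => by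
    simp only [r, ((summable_nat_add_iff n).2 hdsum).tsum_eq_zero_add, zero_add,
      add_right_comm _ 1, add_assoc]
  have hrt : Tendsto r atTop (𝓝 0) := tendsto_sum_nat_add d
  have hsr := tendsto_zero_of_le_one_sub_mul_add_mul_of_le_sub (s := s + r) (c := c + r) (M := M)
    (fun n => add_nonneg (hs n) (hr0 n)) ha ha0 hdiv hη
    (fun n => by simp only [Pi.add_apply]; linarith [h₁ n, hr n])
    (fun n => by simp only [Pi.add_apply]; linarith [h₂ n, hr n])
    (fun φ hφ hηφ ε hε => by
      filter_upwards [hc φ hφ hηφ (ε / 2) (half_pos hε),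
        (hrt.comp hφ).eventually (ge_mem_nhds (half_pos hε))] with k h₁ h₂
      simp only [Pi.add_apply, comp_apply] at h₂ ⊢
      linarith)
  exact squeeze_zero hs (fun n => le_add_of_nonneg_right (hr0 n)) hsr

theorem tendsto_sum_range_add_one_atTop {f : ℕ → ℝ}
    (h : Tendsto (fun N => ∑ n ∈ Finset.range N, f n) atTop atTop) :
    Tendsto (fun N => ∑ n ∈ Finset.range N, f (n + 1)) atTop atTop := by
  refine (tendsto_atTop_add_const_right _ (-f 0) ((tendsto_add_atTop_iff_nat 1).2 h)).congr
    fun N => ?_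
  rw [Finset.sum_range_succ']
  ring

section Halpern

variable {H : Type*} [NormedAddCommGroup H] [InnerProductSpace ℝ H]

theorem norm_halpern_step_sub_sq_le {u p t w x y : H} {a b K e : ℝ} (ha : a ∈ Icc (0 : ℝ) 1)
    (hb : b ∈ Icc (0 : ℝ) 1) (hy : y = a • u + (1 - a) • (b • t + (1 - b) • w))
    (ht : ‖t - p‖ ^ 2 ≤ K) (hw : ‖w - p‖ ^ 2 ≤ ‖x - p‖ ^ 2 - e) (he : 0 ≤ e) :
    ‖y - p‖ ^ 2 ≤ (1 - a) * ‖x - p‖ ^ 2 + a * (2 * ⟪u - p, y - p⟫) + b * K ∧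
      ‖y - p‖ ^ 2 ≤ ‖x - p‖ ^ 2 - (1 - a) * (1 - b) * e + a * ‖u - p‖ ^ 2 + b * K := by
  obtain ⟨ha0, ha1⟩ := ha
  obtain ⟨hb0, hb1⟩ := hb
  set v := b • t + (1 - b) • w
  have hK : 0 ≤ K := (sq_nonneg _).trans ht
  have hv : ‖v - p‖ ^ 2 ≤ ‖x - p‖ ^ 2 - (1 - b) * e + b * K := by
    have := norm_smul_add_smul_sub_sq_le hb0 (sub_nonneg.2 hb1) (add_sub_cancel b 1) t w p
    nlinarith [mul_le_mul_of_nonneg_left hw (sub_nonneg.2 hb1), sq_nonneg ‖x - p‖]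
  constructor
  · have h := norm_add_sq_le_norm_sq_add_two_inner (a • (u - p)) ((1 - a) • (v - p))
    rw [← smul_add_smul_sub_eq (add_sub_cancel a 1), ← hy, norm_smul_of_nonneg (sub_nonneg.2 ha1),
      real_inner_smul_left, mul_pow] at h
    nlinarith [mul_le_mul_of_nonneg_left hv (sub_nonneg.2 ha1),
      mul_nonneg (mul_nonneg (sub_nonneg.2 ha1) ha0) (sq_nonneg ‖v - p‖),
      mul_nonneg (mul_nonneg (sub_nonneg.2 ha1) (sub_nonneg.2 hb1)) he,
      mul_nonneg (mul_nonneg ha0 hb0) hK]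
  · have h := norm_smul_add_smul_sub_sq_le ha0 (sub_nonneg.2 ha1) (add_sub_cancel a 1) u v p
    rw [← hy] at h
    nlinarith [mul_le_mul_of_nonneg_left hv (sub_nonneg.2 ha1),
      mul_nonneg ha0 (sq_nonneg ‖x - p‖), mul_nonneg (mul_nonneg ha0 hb0) hK]

theorem IsNonspreadingOn.eventually_inner_halpern_succ_le [CompleteSpace H] {C : Set H}
    {S : H → H} (hS : IsNonspreadingOn S C) (hCv : Convex ℝ C) (hCc : IsClosed C) {δ : ℝ}
    (hδ : δ ∈ Icc (0 : ℝ) 1) {u p : H} (hpu : ∀ w ∈ C ∩ fixedPoints S, ⟪u - p, w - p⟫ ≤ 0)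
    {α β : ℕ → ℝ} (hα : ∀ n, α n ∈ Icc (0 : ℝ) 1) (hβ : ∀ n, β n ∈ Icc (0 : ℝ) 1)
    {x t : ℕ → H} {B : ℝ} (hxC : ∀ n, x n ∈ C) (hxB : ∀ n, ‖x n‖ ≤ B) (htB : ∀ n, ‖t n‖ ≤ B)
    (hrec : ∀ n, x (n + 1) =
      α n • u + (1 - α n) • (β n • t n + (1 - β n) • ((1 - δ) • x n + δ • S (x n))))
    {φ : ℕ → ℕ} (hαφ : Tendsto (α ∘ φ) atTop (𝓝 0)) (hβφ : Tendsto (β ∘ φ) atTop (𝓝 0))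
    (hres : Tendsto (fun k => x (φ k) - S (x (φ k))) atTop (𝓝 0)) :
    ∀ ε > 0, ∀ᶠ k in atTop, ⟪u - p, x (φ k + 1) - p⟫ ≤ ε := by
  intro ε hε
  have hstep : ∀ n, ‖x (n + 1) - x n‖ ≤ α n * (‖u‖ + B) + β n * (2 * B) + ‖x n - S (x n)‖ :=
    fun n => (norm_halpern_step_sub_le (hα n) (hβ n) hδ (hrec n)).trans <| by
      gcongr ?_ * ?_ + ?_ * ?_ + _
      · exact (hα n).1
      · exact (norm_sub_le _ _).trans (by linarith [hxB n])
      · exact (hβ n).1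
      · exact (norm_sub_le _ _).trans (by linarith [hxB n, htB n])
  have hmove : Tendsto (fun k => x (φ k + 1) - x (φ k)) atTop (𝓝 0) := by
    refine tendsto_zero_iff_norm_tendsto_zero.2
      (squeeze_zero (fun _ => norm_nonneg _) (fun k => hstep (φ k)) ?_)
    simpa using ((hαφ.mul_const _).add (hβφ.mul_const _)).add
      (tendsto_zero_iff_norm_tendsto_zero.1 hres)
  have hinner : Tendsto (fun k => ⟪u - p, x (φ k + 1) - x (φ k)⟫) atTop (𝓝 0) := by
    simpa using (tendsto_const_nhds (x := u - p)).inner hmove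
  filter_upwards [hS.eventually_inner_sub_le hCv hCc hpu (fun k => hxC (φ k)) (fun k => hxB _)
    hres (ε / 2) (half_pos hε), hinner.eventually (ge_mem_nhds (half_pos hε))] with k h₁ h₂
  rw [show x (φ k + 1) - p = (x (φ k) - p) + (x (φ k + 1) - x (φ k)) by abel, inner_add_right]
  linarith

theorem IsNonspreadingOn.tendsto_halpern [CompleteSpace H] {C : Set H} {S : H → H}
    (hS : IsNonspreadingOn S C) (hCv : Convex ℝ C) (hCc : IsClosed C) {δ : ℝ}
    (hδ : δ ∈ Ioo (0 : ℝ) 1) {u p : H} (hp : p ∈ C ∩ fixedPoints S)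
    (hpu : ∀ w ∈ C ∩ fixedPoints S, ⟪u - p, w - p⟫ ≤ 0) {α β : ℕ → ℝ}
    (hα : ∀ n, α n ∈ Icc (0 : ℝ) 1) (hβ : ∀ n, β n ∈ Icc (0 : ℝ) 1) (hα0 : Tendsto α atTop (𝓝 0))
    (hαdiv : Tendsto (fun N => ∑ n ∈ Finset.range N, α n) atTop atTop) (hβsum : Summable β)
    {x t : ℕ → H} {B : ℝ} (hxC : ∀ n, x n ∈ C) (hxB : ∀ n, ‖x n‖ ≤ B) (htB : ∀ n, ‖t n‖ ≤ B)
    (hrec : ∀ n, x (n + 1) =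
      α n • u + (1 - α n) • (β n • t n + (1 - β n) • ((1 - δ) • x n + δ • S (x n)))) :
    Tendsto x atTop (𝓝 p) := by
  have hδδ : 0 < δ * (1 - δ) := mul_pos hδ.1 (sub_pos.2 hδ.2)
  set e : ℕ → ℝ := fun n => δ * (1 - δ) * ‖x n - S (x n)‖ ^ 2
  have he : ∀ n, 0 ≤ e n := fun n => mul_nonneg hδδ.le (sq_nonneg _)
  have htp : ∀ n, ‖t n - p‖ ^ 2 ≤ (B + ‖p‖) ^ 2 := fun n =>
    pow_le_pow_left₀ (norm_nonneg _) ((norm_sub_le _ _).trans (by linarith [htB n])) 2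
  have hstep := fun n => norm_halpern_step_sub_sq_le (hα n) (hβ n) (hrec n) (htp n)
    (norm_averaged_sub_sq_le hδ.1.le (hS.isQuasiNonexpansiveOn _ (hxC n) p hp)) (he n)
  have hβ0 := hβsum.tendsto_atTop_zero
  have hlim := tendsto_zero_of_le_one_sub_mul_add_mul_of_le_sub_of_summable
    (s := fun n => ‖x n - p‖ ^ 2) (η := fun n => (1 - α n) * (1 - β n) * e n)
    (c := fun n => 2 * ⟪u - p, x (n + 1) - p⟫) (d := fun n => β n * (B + ‖p‖) ^ 2)
    (fun n => sq_nonneg _) hα hα0 hαdiv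
    (fun n => mul_nonneg (mul_nonneg (sub_nonneg.2 (hα n).2) (sub_nonneg.2 (hβ n).2)) (he n))
    (fun n => mul_nonneg (hβ n).1 (sq_nonneg _)) (hβsum.mul_right _)
    (fun n => (hstep n).1) (fun n => (hstep n).2) fun φ hφ hηφ ε hε => ?_
  · simpa [Real.sqrt_sq (norm_nonneg _), ← tendsto_iff_norm_sub_tendsto_zero] using hlim.sqrt
  -- `η` is `e` up to a factor tending to `1`
  have hD : Tendsto (fun k => (1 - α (φ k)) * (1 - β (φ k)) * (δ * (1 - δ))) atTop
      (𝓝 (δ * (1 - δ))) := by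
    simpa using (((hα0.comp hφ).const_sub 1).mul ((hβ0.comp hφ).const_sub 1)).mul_const
      (δ * (1 - δ))
  have hsq : Tendsto (fun k => ‖x (φ k) - S (x (φ k))‖ ^ 2) atTop (𝓝 0) := by
    have := hηφ.div hD hδδ.ne'
    rw [zero_div] at this
    refine this.congr' ((hD.eventually_ne hδδ.ne').mono fun k hk => ?_)
    simp only [Pi.div_apply, comp_apply, e]
    rw [← mul_assoc]
    exact mul_div_cancel_left₀ _ hk
  have hres : Tendsto (fun k => x (φ k) - S (x (φ k))) atTop (𝓝 0) := by
    simpa [Real.sqrt_sq (norm_nonneg _), ← tendsto_zero_iff_norm_tendsto_zero] using hsq.sqrt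
  filter_upwards [hS.eventually_inner_halpern_succ_le hCv hCc (Ioo_subset_Icc_self hδ) hpu hα hβ
    hxC hxB htB hrec (hα0.comp hφ) (hβ0.comp hφ) hres (ε / 2) (half_pos hε)] with k hk
  linarith

end Halpern

theorem stmt_18_general {H : Type*} [NormedAddCommGroup H] [InnerProductSpace ℝ H] [CompleteSpace H]
    (C : Set H) (hCc : IsClosed C) (hCv : Convex ℝ C)
    (T S : H → H) (hT : Set.MapsTo T C C) (hS : Set.MapsTo S C C)
    (hne : ∀ x ∈ C, ∀ y ∈ C, ‖T x - T y‖ ≤ ‖x - y‖)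
    (hns : ∀ x ∈ C, ∀ y ∈ C, 2 * ‖S x - S y‖ ^ 2 ≤ ‖S x - y‖ ^ 2 + ‖x - S y‖ ^ 2)
    (hFix : ∃ z ∈ C, T z = z ∧ S z = z)
    (δ : ℝ) (hδ : δ ∈ Set.Ioo (0 : ℝ) 1)
    (AT AS : H → H)
    (hAT : ∀ x, AT x = (1 - δ) • x + δ • T x)
    (hAS : ∀ x, AS x = (1 - δ) • x + δ • S x)
    (u : H) (hu : u ∈ C)
    (α β : ℕ → ℝ) (hα : ∀ n, α n ∈ Set.Ioo (0 : ℝ) 1) (hβ : ∀ n, β n ∈ Set.Icc (0 : ℝ) 1)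
    (hα0 : Filter.Tendsto α Filter.atTop (nhds 0))
    (hαdiv : Filter.Tendsto (fun N => ∑ n ∈ Finset.range N, α n) Filter.atTop Filter.atTop)
    (hβsum : Summable β)
    (x : ℕ → H) (hx1 : x 1 ∈ C)
    (hrec : ∀ n ≥ 1, x (n + 1) =
      α n • u + (1 - α n) • (β n • AT (x n) + (1 - β n) • AS (x n))) :
    ∃ p, p ∈ C ∧ S p = p ∧
      (∀ y ∈ C, S y = y → ‖u - p‖ ≤ ‖u - y‖) ∧
      Filter.Tendsto x Filter.atTop (nhds p) := by
  obtain ⟨z, hzC, hTz, hSz⟩ := hFix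
  obtain rfl : AT = fun y => (1 - δ) • y + δ • T y := funext hAT
  obtain rfl : AS = fun y => (1 - δ) • y + δ • S y := funext hAS
  have hSn : IsNonspreadingOn S C := hns
  have hSq := hSn.isQuasiNonexpansiveOn
  have hFv := hSq.convex_inter_fixedPoints hCv
  obtain ⟨p, hp, hpmin⟩ := exists_norm_eq_iInf_of_complete_convex (K := C ∩ fixedPoints S)
    ⟨z, hzC, hSz⟩ (hSq.isClosed_inter_fixedPoints hCc).isComplete hFv u
  refine ⟨p, hp.1, hp.2, fun w hwC hSw => ?_, ?_⟩
  · rw [hpmin]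
    exact ciInf_le ⟨0, forall_mem_range.2 fun _ => norm_nonneg _⟩
      (⟨w, hwC, hSw⟩ : ↥(C ∩ fixedPoints S))
  -- the iterates stay in the convex set `s`, which `T` and `S`, hence `AT` and `AS`, preserve
  set R := max ‖x 1 - z‖ ‖u - z‖
  set s := C ∩ Metric.closedBall z R
  have hs : Convex ℝ s := hCv.inter (convex_closedBall _ _)
  have hATs := hs.mapsTo_averaged (hT.inter_closedBall
    (fun y hy => by simpa only [hTz] using hne y hy z hzC) R) (Ioo_subset_Icc_self hδ)
  have hASs := hs.mapsTo_averaged (hS.inter_closedBall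
    (fun y hy => hSq y hy z ⟨hzC, hSz⟩) R) (Ioo_subset_Icc_self hδ)
  have hα' := fun n => Ioo_subset_Icc_self (hα (n + 1))
  have hxs : ∀ n, x (n + 1) ∈ s := hs.halpern_iterate_mem hATs hASs
    ⟨hu, mem_closedBall_iff_norm.2 (le_max_right _ _)⟩ hα' (fun n => hβ _)
    ⟨hx1, mem_closedBall_iff_norm.2 (le_max_left _ _)⟩ fun n => hrec (n + 1) le_add_self
  have hbdd : ∀ y ∈ s, ‖y‖ ≤ ‖z‖ + R := fun y hy =>
    (norm_le_insert' y z).trans (by linarith [mem_closedBall_iff_norm.1 hy.2])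
  rw [← tendsto_add_atTop_iff_nat 1]
  exact hSn.tendsto_halpern hCv hCc hδ hp ((norm_eq_iInf_iff_real_inner_le_zero hFv hp).1 hpmin)
    hα' (fun n => hβ _) (hα0.comp (tendsto_add_atTop_nat 1)) (tendsto_sum_range_add_one_atTop hαdiv)
    ((summable_nat_add_iff 1).2 hβsum) (fun n => (hxs n).1) (fun n => hbdd _ (hxs n))
    (fun n => hbdd _ (hATs (hxs n))) fun n => hrec (n + 1) le_add_self

theorem stmt_18 {H : Type*} [NormedAddCommGroup H] [InnerProductSpace ℝ H] [CompleteSpace H]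
    (C : Set H) (hC : C.Nonempty) (hCc : IsClosed C) (hCv : Convex ℝ C)
    (T S : H → H) (hT : Set.MapsTo T C C) (hS : Set.MapsTo S C C)
    (hne : ∀ x ∈ C, ∀ y ∈ C, ‖T x - T y‖ ≤ ‖x - y‖)
    (hns : ∀ x ∈ C, ∀ y ∈ C, 2 * ‖S x - S y‖ ^ 2 ≤ ‖S x - y‖ ^ 2 + ‖x - S y‖ ^ 2)
    (hFix : ∃ z ∈ C, T z = z ∧ S z = z)
    (δ : ℝ) (hδ : δ ∈ Set.Ioo (0 : ℝ) 1)
    (AT AS : H → H)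
    (hAT : ∀ x, AT x = (1 - δ) • x + δ • T x)
    (hAS : ∀ x, AS x = (1 - δ) • x + δ • S x)
    (u : H) (hu : u ∈ C)
    (α β : ℕ → ℝ) (hα : ∀ n, α n ∈ Set.Ioo (0 : ℝ) 1) (hβ : ∀ n, β n ∈ Set.Icc (0 : ℝ) 1)
    (hα0 : Filter.Tendsto α Filter.atTop (nhds 0))
    (hαdiv : Filter.Tendsto (fun N => ∑ n ∈ Finset.range N, α n) Filter.atTop Filter.atTop)
    (hβsum : Summable β)
    (x : ℕ → H) (hx1 : x 1 ∈ C)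
    (hrec : ∀ n ≥ 1, x (n + 1) =
      α n • u + (1 - α n) • (β n • AT (x n) + (1 - β n) • AS (x n))) :
    ∃ p, p ∈ C ∧ S p = p ∧
      (∀ y ∈ C, S y = y → ‖u - p‖ ≤ ‖u - y‖) ∧
      Filter.Tendsto x Filter.atTop (nhds p) :=
  stmt_18_general C hCc hCv T S hT hS hne hns hFix δ hδ AT AS hAT hAS u hu α β hα hβ hα0 hαdiv hβsum
    x hx1 hrec
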